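/- arXiv:2305.04687 — 4 statements merged into one kernel-verified Lean document; each statement's English description precedes it below -/
import Mathlib

section
/- For every integer k ≥ 2 and every real γ > 0, the Marchenko–Pastur moments satisfy the Catalan-type recurrence β(k,γ) = (1+γ)·β(k−1,γ) + γ·Σ_{a=1}^{k−2} β(a,γ)·β(k−a−1,γ). -/
open Finset

/-- The `k`-th moment of the Marchenko–Pastur distribution with ratio parameter `γ`:
`β(k,γ) = Σ_{r=0}^{k−1} (1/(r+1))·binom(k,r)·binom(k−1,r)·γ^r`. -/
noncomputable def mpMoment (k : ℕ) (γ : ℝ) : ℝ :=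
  ∑ r ∈ Finset.range k, (1 / ((r : ℝ) + 1)) * (Nat.choose k r : ℝ) *
    (Nat.choose (k - 1) r : ℝ) * γ ^ r

/-!
The coefficients of `β(n, γ)` are the Narayana numbers `C(n,r) C(n,r+1) / n`, and the contiguous
relations of binomial coefficients give the three-term recurrence
`(n+3) β(n+2) = (2n+3)(1+γ) β(n+1) - n (1-γ)² β(n)`.
For `f = Σ β(n) xⁿ` this is the linear ODE `x Δ f' = ((1+γ)x - 1) f + 2x`,
with `Δ = 1 - 2(1+γ)x + (1-γ)²x²`. Then `E = γ x f² + ((1+γ)x - 1) f + x` satisfies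
`x Δ E' + (1 - (1-γ)²x²) E = (2γxf + (1+γ)x - 1) (x Δ f' - ((1+γ)x - 1) f - 2x) = 0`,
and a power series solving this ODE vanishes, because its `n`-th coefficient expresses
`(n+1) Eₙ` through the earlier ones. The coefficient of `x^k` in `E = 0` is the recurrence.
-/

theorem Nat.cast_choose_succ_right_eq {R : Type*} [CommRing R] (n k : ℕ) :
    (n.choose (k + 1) : R) * (k + 1) = n.choose k * (n - k) := by
  rcases le_or_gt k n with h | h
  · simpa [Nat.cast_sub h] using congrArg (Nat.cast : ℕ → R) (Nat.choose_succ_right_eq n k)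
  · simp [Nat.choose_eq_zero_of_lt h, Nat.choose_eq_zero_of_lt (h.trans (Nat.lt_succ_self k))]

theorem choose_mul_choose_succ_three_term (n r : ℕ) :
    ((n : ℝ) + 1) * (n + 3) * ((n + 2).choose (r + 2) * (n + 2).choose (r + 3))
      - (n + 2) * (2 * n + 3) * ((n + 1).choose (r + 2) * (n + 1).choose (r + 3)
        + (n + 1).choose (r + 1) * (n + 1).choose (r + 2))
      + (n + 1) * (n + 2) * (n.choose (r + 2) * n.choose (r + 3)
        - 2 * (n.choose (r + 1) * n.choose (r + 2)) + n.choose r * n.choose (r + 1)) = 0 := by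
  have ratio (k : ℕ) : (n.choose (k + 1) : ℝ) = n.choose k * (n - k) / (k + 1) := by
    rw [eq_div_iff (by positivity), Nat.cast_choose_succ_right_eq]
  simp only [Nat.choose_succ_succ', Nat.cast_add]
  rw [ratio (r + 2), ratio (r + 1), ratio r]
  push_cast
  field_simp
  ring

section
open Polynomial

/-- `n β(n, γ)` as a polynomial in `γ`; the factor `n` clears the denominators. -/
noncomputable def scaledNarayanaPoly (n : ℕ) : ℝ[X] :=
  ∑ r ∈ range n, C ((n.choose r : ℝ) * n.choose (r + 1)) * X ^ r

theorem coeff_scaledNarayanaPoly (n r : ℕ) :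
    (scaledNarayanaPoly n).coeff r = n.choose r * n.choose (r + 1) := by
  simp only [scaledNarayanaPoly, finsetSum_coeff, coeff_C_mul_X_pow, sum_ite_eq, mem_range]
  split_ifs with h
  · rfl
  · simp [Nat.choose_eq_zero_of_lt (by omega : n < r + 1)]

theorem scaledNarayanaPoly_three_term (n : ℕ) :
    C (((n : ℝ) + 1) * (n + 3)) * scaledNarayanaPoly (n + 2)
      - C (((n : ℝ) + 2) * (2 * n + 3)) * (1 + X) * scaledNarayanaPoly (n + 1)
      + C (((n : ℝ) + 1) * (n + 2)) * (1 - X) ^ 2 * scaledNarayanaPoly n = 0 := by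
  ext r
  simp only [sub_sq, one_pow, mul_one, add_mul, sub_mul, one_mul, mul_assoc, coeff_add, coeff_sub,
    coeff_C_mul, coeff_ofNat_mul, coeff_zero]
  rcases r with _ | _ | r
  · simp only [zero_add, coeff_scaledNarayanaPoly, mul_coeff_zero, coeff_X_zero, coeff_X_pow,
      Nat.choose_zero_right, Nat.choose_one_right, if_neg two_ne_zero.symm]
    push_cast
    ring
  · simp only [zero_add, coeff_scaledNarayanaPoly, coeff_X_mul, coeff_X_pow_mul',
      if_neg one_lt_two.not_ge, Nat.choose_zero_right, Nat.choose_one_right, Nat.reduceAdd,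
      Nat.cast_choose_two]
    push_cast
    ring
  · simp only [coeff_X_pow_mul, coeff_X_mul, coeff_scaledNarayanaPoly]
    linear_combination choose_mul_choose_succ_three_term n r

theorem eval_scaledNarayanaPoly (n : ℕ) (γ : ℝ) :
    (scaledNarayanaPoly n).eval γ = n * mpMoment n γ := by
  rcases n with _ | n
  · simp [scaledNarayanaPoly, mpMoment]
  simp only [scaledNarayanaPoly, mpMoment, eval_finsetSum, eval_mul, eval_C, eval_pow, eval_X,
    mul_sum, Nat.add_sub_cancel]
  refine sum_congr rfl fun r _ => ?_
  have := congrArg (Nat.cast : ℕ → ℝ) (Nat.add_one_mul_choose_eq n r)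
  push_cast at this ⊢
  field_simp
  linear_combination -((n + 1).choose r : ℝ) * γ ^ r * this

theorem mpMoment_three_term (n : ℕ) (γ : ℝ) :
    ((n : ℝ) + 3) * mpMoment (n + 2) γ - (2 * n + 3) * (1 + γ) * mpMoment (n + 1) γ
      + n * (1 - γ) ^ 2 * mpMoment n γ = 0 := by
  have h := congrArg (eval γ) (scaledNarayanaPoly_three_term n)
  simp only [eval_add, eval_sub, eval_mul, eval_C, eval_pow, eval_X, eval_one, eval_zero,
    eval_scaledNarayanaPoly] at h
  push_cast at h
  refine (mul_eq_zero.mp ?_).resolve_left (by positivity : ((n : ℝ) + 1) * (n + 2) ≠ 0)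
  linear_combination h

end

@[simp] theorem mpMoment_zero (γ : ℝ) : mpMoment 0 γ = 0 := by simp [mpMoment]

@[simp] theorem mpMoment_one (γ : ℝ) : mpMoment 1 γ = 1 := by simp [mpMoment]

namespace PowerSeries

variable {R : Type*} [CommRing R]

theorem coeff_X_mul_derivative (f : R⟦X⟧) (n : ℕ) :
    coeff n (X * d⁄dX R f) = n * coeff n f := by
  rcases n with _ | n
  · simp
  · rw [coeff_succ_X_mul, coeff_derivative]
    push_cast
    ring

theorem eq_zero_of_X_mul_mul_derivative_add_mul_eq_zero [IsDomain R] [CharZero R]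
    {A B E : R⟦X⟧} (hA : constantCoeff A = 1) (hB : constantCoeff B = 1)
    (h : X * A * d⁄dX R E + B * E = 0) : E = 0 := by
  ext n
  induction n using Nat.strong_induction_on with
  | _ n ih =>
  have hn := congrArg (coeff n) h
  rw [mul_comm X A, mul_assoc, map_add, coeff_mul, coeff_mul, ← sum_add_distrib,
    sum_eq_single (0, n)] at hn
  · simp only [coeff_zero_eq_constantCoeff_apply, hA, hB, coeff_X_mul_derivative,
      map_zero] at hn ⊢
    have : ((n : R) + 1) * coeff n E = 0 := by linear_combination hn
    exact (mul_eq_zero.mp this).resolve_left (by exact_mod_cast n.succ_ne_zero)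
  · rintro ⟨i, j⟩ hij hne
    have hj : j < n := by
      rw [HasAntidiagonal.mem_antidiagonal] at hij
      by_contra! hle
      exact hne (Prod.ext (by dsimp; omega) (by dsimp; omega))
    simp [coeff_X_mul_derivative, ih j hj]
  · simp

theorem coeff_succ_mk_sq {u : ℕ → R} (hu : u 0 = 0) (n : ℕ) :
    coeff (n + 1) (mk u ^ 2) = ∑ a ∈ Icc 1 n, u a * u (n + 1 - a) := by
  rw [sq, coeff_mul, Nat.sum_antidiagonal_eq_sum_range_succ_mk]
  simp only [coeff_mk]
  refine (sum_subset (fun a ha => ?_) fun a ha hna => ?_).symm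
  · simp only [mem_Icc, mem_range] at ha ⊢
    omega
  · simp only [mem_Icc, mem_range] at ha hna
    rcases (by omega : a = 0 ∨ a = n + 1) with rfl | rfl <;> simp [hu]

end PowerSeries

section
open PowerSeries

noncomputable def mpMomentSeries (γ : ℝ) : ℝ⟦X⟧ := mk fun n => mpMoment n γ

theorem mpMomentSeries_ode (γ : ℝ) :
    X * (1 - 2 * (1 + C γ) * X + (1 - C γ) ^ 2 * X ^ 2) * d⁄dX ℝ (mpMomentSeries γ)
      = ((1 + C γ) * X - 1) * mpMomentSeries γ + 2 * X := by
  set f := mpMomentSeries γ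
  have hlhs : X * (1 - 2 * (1 + C γ) * X + (1 - C γ) ^ 2 * X ^ 2) * d⁄dX ℝ f
      = X * d⁄dX ℝ f - C (2 * (1 + γ)) * (X * (X * d⁄dX ℝ f))
        + C ((1 - γ) ^ 2) * (X * (X * (X * d⁄dX ℝ f))) := by
    simp only [map_mul, map_add, map_sub, map_pow, map_one, map_ofNat]
    ring
  have hrhs : ((1 + C γ) * X - 1) * f + 2 * X = C (1 + γ) * (X * f) - f + C 2 * X := by
    simp only [map_add, map_one, map_ofNat]
    ring
  ext k
  rw [hlhs, hrhs, map_add, map_sub, map_add, map_sub, coeff_C_mul, coeff_C_mul, coeff_C_mul,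
    coeff_C_mul]
  rcases k with _ | _ | n
  · simp [f, mpMomentSeries]
  · simp only [zero_add, f, mpMomentSeries, coeff_succ_X_mul, coeff_derivative, coeff_zero_X_mul,
      coeff_one_X, coeff_mk, mpMoment_zero, mpMoment_one]
    norm_num
  · simp only [coeff_succ_X_mul, coeff_derivative, coeff_X_mul_derivative, coeff_X, f,
      mpMomentSeries, coeff_mk]
    push_cast
    linear_combination mpMoment_three_term n γ

theorem mpMomentSeries_quadratic (γ : ℝ) :
    C γ * X * mpMomentSeries γ ^ 2 + ((1 + C γ) * X - 1) * mpMomentSeries γ + X = 0 := by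
  set f := mpMomentSeries γ
  refine eq_zero_of_X_mul_mul_derivative_add_mul_eq_zero
    (A := 1 - 2 * (1 + C γ) * X + (1 - C γ) ^ 2 * X ^ 2) (B := 1 - (1 - C γ) ^ 2 * X ^ 2)
    (by simp) (by simp) ?_
  simp only [map_add, map_sub, Derivation.leibniz, Derivation.leibniz_pow, derivative_X,
    derivative_C, Derivation.map_one_eq_zero, smul_eq_mul]
  linear_combination (2 * C γ * X * f + (1 + C γ) * X - 1) * mpMomentSeries_ode γ

end

theorem mpMoment_recurrence_general (k : ℕ) (hk : 2 ≤ k) (γ : ℝ) :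
    mpMoment k γ = (1 + γ) * mpMoment (k - 1) γ +
      γ * ∑ a ∈ Finset.Icc 1 (k - 2), mpMoment a γ * mpMoment (k - a - 1) γ := by
  obtain ⟨j, rfl⟩ : ∃ j, k = j + 2 := ⟨k - 2, by omega⟩
  have h := congrArg (PowerSeries.coeff (j + 2)) (mpMomentSeries_quadratic γ)
  simp only [mpMomentSeries, add_mul, sub_mul, one_mul, mul_assoc, map_add, map_sub, map_zero,
    PowerSeries.coeff_C_mul, PowerSeries.coeff_succ_X_mul, PowerSeries.coeff_mk,
    PowerSeries.coeff_succ_mk_sq (u := (mpMoment · γ)) (mpMoment_zero γ), PowerSeries.coeff_X,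
    if_neg (by omega : j + 2 ≠ 1), add_zero] at h
  rw [show j + 2 - 1 = j + 1 by omega, show j + 2 - 2 = j by omega,
    sum_congr rfl fun a _ => by rw [show j + 2 - a - 1 = j + 1 - a by omega]]
  linear_combination -h

/-- For every integer `k ≥ 2` and every real `γ > 0`, the Marchenko–Pastur moments satisfy
`β(k,γ) = (1+γ)·β(k−1,γ) + γ·Σ_{a=1}^{k−2} β(a,γ)·β(k−a−1,γ)`. -/
theorem mpMoment_recurrence (k : ℕ) (hk : 2 ≤ k) (γ : ℝ) (hγ : 0 < γ) :
    mpMoment k γ = (1 + γ) * mpMoment (k - 1) γ +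
      γ * ∑ a ∈ Finset.Icc 1 (k - 2), mpMoment a γ * mpMoment (k - a - 1) γ :=
  mpMoment_recurrence_general k hk γ
end

section
/- There exist constants c, c', T' > 0 such that for every integer n ≥ 2 and every real t ≥ T', the Haar probability measure μ on the orthogonal group O(n) = {U ∈ ℝ^{n×n} : U·Uᵀ = I} satisfies μ({U ∈ O(n) : max_{1≤i,j≤n} |U_{ij}| ≥ t·√(log(n)/n)}) ≤ n²·(1 − exp(−c·n^{1−c'·t²})). -/
open MeasureTheory

/-- The Borel (product) σ-algebra on real matrices. -/
instance matrixMeasurableSpace (m n : Type*) : MeasurableSpace (Matrix m n ℝ) :=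
  show MeasurableSpace (m → n → ℝ) from inferInstance

/-!
Multiplying a Haar-distributed `U ∈ O(n)` on the left by an orthogonal matrix whose `i`-th row is
the constant vector `n^{-1/2}` (a reflection) shows that the entry `U i j` has the law of the
rescaled column sum `n^{-1/2} ∑ₘ U m j`. Multiplying on the left by sign diagonal matrices and
averaging over all signs turns the moment generating function of the column sum into the mean of
`∏ₘ cosh (t U m j) ≤ exp (t² ∑ₘ (U m j)² / 2) = exp (t² / 2)`. Hence each entry is sub-Gaussian
with variance proxy `1/n`, and the Chernoff bound with a union bound over the `2n²` one-sided
events gives `μ (max |U i j| ≥ a) ≤ 2 n² exp (-n a² / 2)`. For `a = t √(log n / n)` this is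
`2 n^{2 - t²/2}`, which is at most `n² (1 - exp (-2 n^{1 - t²/2}))` as soon as `t ≥ 2`.
-/

open Matrix ProbabilityTheory Real
open scoped NNReal ENNReal

lemma integrable_exp_of_le {α : Type*} [MeasurableSpace α] {μ : Measure α} [IsFiniteMeasure μ]
    {f : α → ℝ} (hf : Measurable f) {C : ℝ} (hC : ∀ x, f x ≤ C) :
    Integrable (fun x => exp (f x)) μ :=
  .of_bound (by fun_prop) (exp C) <| ae_of_all _ fun x => by
    simpa [abs_of_pos (exp_pos _)] using hC x

lemma ProbabilityTheory.HasSubgaussianMGF.measure_abs_ge_le {Ω : Type*} [MeasurableSpace Ω]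
    {μ : Measure Ω} [IsFiniteMeasure μ] {X : Ω → ℝ} {c : ℝ≥0} (h : HasSubgaussianMGF X c μ)
    {ε : ℝ} (hε : 0 ≤ ε) :
    μ {ω | ε ≤ |X ω|} ≤ ENNReal.ofReal (2 * exp (-ε ^ 2 / (2 * c))) := by
  have hsplit : {ω | ε ≤ |X ω|} = {ω | ε ≤ X ω} ∪ {ω | ε ≤ (-X) ω} := by
    ext ω
    simp [le_abs]
  rw [hsplit, two_mul, ENNReal.ofReal_add (exp_pos _).le (exp_pos _).le]
  refine (measure_union_le _ _).trans (add_le_add ?_ ?_) <;>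
    rw [← ofReal_measureReal] <;> gcongr
  exacts [h.measure_ge_le hε, h.neg.measure_ge_le hε]

lemma sum_signs_exp_eq_prod_cosh {ι : Type*} [Fintype ι] [DecidableEq ι] (x : ι → ℝ) :
    ∑ ε : ι → Bool, exp (∑ m, (if ε m then 1 else -1) * x m) = ∏ m, 2 * cosh (x m) := by
  have h : ∀ m, 2 * cosh (x m) = ∑ b : Bool, exp ((if b then 1 else -1) * x m) := by
    intro m
    rw [cosh_eq, Fintype.sum_bool, if_pos rfl, if_neg Bool.false_ne_true, one_mul, neg_one_mul]
    ring
  simp_rw [h, Finset.prod_univ_sum, Fintype.piFinset_univ, exp_sum]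

lemma sum_signs_exp_le {ι : Type*} [Fintype ι] [DecidableEq ι] (x : ι → ℝ) :
    ∑ ε : ι → Bool, exp (∑ m, (if ε m then 1 else -1) * x m) ≤
      2 ^ Fintype.card ι * exp (∑ m, x m ^ 2 / 2) :=
  calc _ = ∏ m, 2 * cosh (x m) := sum_signs_exp_eq_prod_cosh x
    _ ≤ ∏ m, 2 * exp (x m ^ 2 / 2) :=
        Finset.prod_le_prod (fun m _ => by positivity) fun m _ =>
          mul_le_mul_of_nonneg_left (cosh_le_exp_half_sq _) zero_le_two
    _ = 2 ^ Fintype.card ι * exp (∑ m, x m ^ 2 / 2) := by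
        rw [Finset.prod_mul_distrib, ← exp_sum, Finset.prod_const, Finset.card_univ]

lemma Measurable.matrix_mul {α l m n : Type*} [MeasurableSpace α] [Fintype m]
    {f : α → Matrix l m ℝ} {g : α → Matrix m n ℝ} (hf : Measurable f) (hg : Measurable g) :
    Measurable fun x => f x * g x :=
  measurable_pi_lambda _ fun i => measurable_pi_lambda _ fun j => by
    simp only [Matrix.mul_apply]
    fun_prop

namespace Matrix.orthogonalGroup

variable {ι : Type*} [Fintype ι] [DecidableEq ι]

instance : MeasurableMul (orthogonalGroup ι ℝ) where
  measurable_const_mul _ := (measurable_const.matrix_mul measurable_subtype_coe).subtype_mk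
  measurable_mul_const _ := (measurable_subtype_coe.matrix_mul measurable_const).subtype_mk

@[fun_prop]
lemma measurable_apply (i j : ι) :
    Measurable fun U : orthogonalGroup ι ℝ => (U : Matrix ι ι ℝ) i j :=
  (measurable_pi_apply j).comp ((measurable_pi_apply i).comp measurable_subtype_coe)

lemma abs_apply_le_one (U : orthogonalGroup ι ℝ) (i j : ι) : |(U : Matrix ι ι ℝ) i j| ≤ 1 :=
  entry_norm_bound_of_unitary U.2 i j

lemma sum_sq_apply_col (U : orthogonalGroup ι ℝ) (j : ι) :
    ∑ m, (U : Matrix ι ι ℝ) m j ^ 2 = 1 := by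
  simpa [Matrix.mul_apply, sq] using congrFun₂ ((mem_orthogonalGroup_iff' ι ℝ).1 U.2) j j

lemma exists_row_eq {v : EuclideanSpace ℝ ι} (hv : ‖v‖ = 1) (i : ι) :
    ∃ H ∈ orthogonalGroup ι ℝ, ∀ m, H i m = v m := by
  set e := EuclideanSpace.single i (1 : ℝ)
  set R := Submodule.reflection (ℝ ∙ (e - v))ᗮ
  have hR : R e = v := Submodule.reflection_sub (by simp [e, hv])
  set b := EuclideanSpace.basisFun ι ℝ
  refine ⟨(R.toMatrix b.toBasis b.toBasis)ᵀ,
    transpose_mem_unitaryGroup_iff.2 (R.toMatrix_mem_unitaryGroup b b), fun m => ?_⟩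
  simp [LinearMap.toMatrix_apply, b, ← hR, e]

def signDiagonal (ε : ι → Bool) : orthogonalGroup ι ℝ :=
  ⟨diagonal fun m => if ε m then 1 else -1, by
    rw [mem_orthogonalGroup_iff, diagonal_transpose, diagonal_mul_diagonal, ← diagonal_one]
    congr with m
    split_ifs <;> simp⟩

variable (μ : Measure (orthogonalGroup ι ℝ)) [IsProbabilityMeasure μ] [μ.IsMulLeftInvariant]

theorem mgf_sum_col_le (j : ι) (t : ℝ) :
    mgf (fun U : orthogonalGroup ι ℝ => ∑ m, (U : Matrix ι ι ℝ) m j) μ t ≤ exp (t ^ 2 / 2) := by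
  set X := fun U : orthogonalGroup ι ℝ => ∑ m, (U : Matrix ι ι ℝ) m j
  set g : (ι → Bool) → orthogonalGroup ι ℝ → ℝ :=
    fun ε U => exp (∑ m, (if ε m then 1 else -1) * (t * (U : Matrix ι ι ℝ) m j))
  have hg_eq : ∀ ε, ∫ U, g ε U ∂μ = mgf X μ t := by
    intro ε
    rw [mgf, ← integral_mul_left_eq_self _ (signDiagonal ε)]
    congr with U
    simp only [g, X, signDiagonal, Submonoid.coe_mul, diagonal_mul, Finset.mul_sum, exp_eq_exp]
    refine Finset.sum_congr rfl fun m _ => ?_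
    split_ifs <;> ring
  have hg_int : ∀ ε, Integrable (g ε) μ := fun ε =>
    integrable_exp_of_le (C := ∑ _m : ι, |t|) (by fun_prop) fun U =>
      Finset.sum_le_sum fun m _ => by
        have := abs_apply_le_one U m j
        split_ifs <;> nlinarith [abs_le.1 this, abs_nonneg t, le_abs_self t, neg_abs_le t]
  have hg_le : ∀ U, ∑ ε, g ε U ≤ 2 ^ Fintype.card ι * exp (t ^ 2 / 2) := by
    intro U
    convert sum_signs_exp_le fun m => t * (U : Matrix ι ι ℝ) m j using 3
    simp_rw [mul_pow, ← Finset.sum_div, ← Finset.mul_sum, sum_sq_apply_col, mul_one]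
  have hmul : 2 ^ Fintype.card ι * mgf X μ t ≤ 2 ^ Fintype.card ι * exp (t ^ 2 / 2) :=
    calc _ = ∑ ε : ι → Bool, ∫ U, g ε U ∂μ := by simp [hg_eq]
      _ = ∫ U, ∑ ε, g ε U ∂μ := (integral_finsetSum _ fun ε _ => hg_int ε).symm
      _ ≤ ∫ _U, 2 ^ Fintype.card ι * exp (t ^ 2 / 2) ∂μ :=
          integral_mono (integrable_finsetSum _ fun ε _ => hg_int ε) (integrable_const _) hg_le
      _ = 2 ^ Fintype.card ι * exp (t ^ 2 / 2) := by simp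
  exact le_of_mul_le_mul_left hmul (by positivity)

theorem hasSubgaussianMGF_apply (i j : ι) :
    HasSubgaussianMGF (fun U : orthogonalGroup ι ℝ => (U : Matrix ι ι ℝ) i j)
      (Fintype.card ι : ℝ≥0)⁻¹ μ where
  integrable_exp_mul t := integrable_exp_of_le (C := |t|) (by fun_prop) fun U => by
    nlinarith [abs_le.1 (abs_apply_le_one U i j), abs_nonneg t, le_abs_self t, neg_abs_le t]
  mgf_le t := by
    set n := Fintype.card ι
    have hn : (0 : ℝ) < n := by exact_mod_cast Fintype.card_pos_iff.2 ⟨i⟩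
    have hv : ‖WithLp.toLp 2 fun _ : ι => (√n)⁻¹‖ = 1 := by
      simp [EuclideanSpace.norm_eq, inv_pow, sq_sqrt hn.le, n, mul_inv_cancel₀ hn.ne']
    obtain ⟨H, hH, hrow⟩ := exists_row_eq hv i
    calc mgf (fun U : orthogonalGroup ι ℝ => (U : Matrix ι ι ℝ) i j) μ t
        = mgf (fun U : orthogonalGroup ι ℝ => ∑ m, (U : Matrix ι ι ℝ) m j) μ (t / √n) := by
          rw [mgf, mgf, ← integral_mul_left_eq_self _ (⟨H, hH⟩ : orthogonalGroup ι ℝ)]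
          congr with U
          simp [Matrix.mul_apply, hrow, ← Finset.mul_sum, div_eq_mul_inv, mul_assoc]
      _ ≤ exp ((t / √n) ^ 2 / 2) := mgf_sum_col_le μ j _
      _ = exp ((n : ℝ≥0)⁻¹ * t ^ 2 / 2) := by
          rw [div_pow, sq_sqrt hn.le]
          push_cast
          ring_nf

theorem measure_exists_abs_apply_ge_le {a : ℝ} (ha : 0 ≤ a) :
    μ {U : orthogonalGroup ι ℝ | ∃ i j, a ≤ |(U : Matrix ι ι ℝ) i j|} ≤
      ENNReal.ofReal (Fintype.card ι ^ 2 * (2 * exp (-(Fintype.card ι * a ^ 2) / 2))) := by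
  set n := Fintype.card ι
  have hentry : ∀ i j, μ {U : orthogonalGroup ι ℝ | a ≤ |(U : Matrix ι ι ℝ) i j|} ≤
      ENNReal.ofReal (2 * exp (-(n * a ^ 2) / 2)) := fun i j => by
    convert (hasSubgaussianMGF_apply μ i j).measure_abs_ge_le ha using 4
    push_cast
    field_simp
    rw [mul_comm]
  calc μ {U : orthogonalGroup ι ℝ | ∃ i j, a ≤ |(U : Matrix ι ι ℝ) i j|}
      = μ (⋃ i, ⋃ j, {U : orthogonalGroup ι ℝ | a ≤ |(U : Matrix ι ι ℝ) i j|}) := by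
        simp only [Set.ofPred_exists]
    _ ≤ ∑ i, ∑ j, μ {U : orthogonalGroup ι ℝ | a ≤ |(U : Matrix ι ι ℝ) i j|} :=
        (measure_iUnion_fintype_le _ _).trans
          (Finset.sum_le_sum fun i _ => measure_iUnion_fintype_le _ _)
    _ ≤ ∑ _i : ι, ∑ _j : ι, ENNReal.ofReal (2 * exp (-(n * a ^ 2) / 2)) := by
        gcongr with i _ j _
        exact hentry i j
    _ = ENNReal.ofReal (n ^ 2 * (2 * exp (-(n * a ^ 2) / 2))) := by
        rw [ENNReal.ofReal_mul (by positivity)]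
        simp [sq, mul_assoc, n]

end Matrix.orthogonalGroup

lemma half_le_one_sub_exp_neg {z : ℝ} (hz₀ : 0 ≤ z) (hz₁ : z ≤ 1) : z / 2 ≤ 1 - exp (-z) := by
  have h : exp (-z) * (z + 1) ≤ 1 := by
    simpa [← exp_add] using mul_le_mul_of_nonneg_left (add_one_le_exp z).ge (exp_pos (-z)).le
  nlinarith [exp_pos (-z)]

lemma two_mul_exp_neg_sq_mul_log_le {n t : ℝ} (hn : 2 ≤ n) (ht : 2 ≤ t) :
    2 * exp (-(t ^ 2 * log n) / 2) ≤ 1 - exp (-2 * n ^ (1 - 1 / 2 * t ^ 2)) := by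
  have hn₀ : 0 < n := by linarith
  have hsplit : n ^ (1 - 1 / 2 * t ^ 2) = n * exp (-(t ^ 2 * log n) / 2) := by
    rw [rpow_sub hn₀, rpow_one, rpow_def_of_pos hn₀, div_eq_mul_inv, ← exp_neg]
    ring_nf
  have hsmall : n ^ (1 - 1 / 2 * t ^ 2) ≤ 1 / 2 :=
    calc n ^ (1 - 1 / 2 * t ^ 2) ≤ n ^ (-1 : ℝ) :=
          rpow_le_rpow_of_exponent_le (by linarith) (by nlinarith)
      _ ≤ 1 / 2 := by
          rw [rpow_neg_one]
          exact inv_le_of_inv_le₀ (by norm_num) (by linarith)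
  have := half_le_one_sub_exp_neg (z := 2 * n ^ (1 - 1 / 2 * t ^ 2)) (by positivity) (by linarith)
  rw [neg_mul]
  nlinarith [exp_pos (-(t ^ 2 * log n) / 2)]

/-- Entry delocalization for Haar-distributed orthogonal matrices: there are constants
`c, c', T' > 0` such that for every `n ≥ 2` and `t ≥ T'`, the Haar probability measure `μ`
on `O(n)` (formalized as any left-translation-invariant Borel probability measure on the
orthogonal group, which is unique) satisfies
`μ({U : max_{i,j} |U_{ij}| ≥ t·√(log n / n)}) ≤ n²·(1 − exp(−c·n^{1−c'·t²}))`. -/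
theorem haar_orthogonal_delocalization :
    ∃ c c' T' : ℝ, 0 < c ∧ 0 < c' ∧ 0 < T' ∧
      ∀ n : ℕ, 2 ≤ n →
        ∀ μ : Measure (Matrix.orthogonalGroup (Fin n) ℝ), IsProbabilityMeasure μ →
          (∀ V : Matrix.orthogonalGroup (Fin n) ℝ,
            Measure.map (fun U => V * U) μ = μ) →
          ∀ t : ℝ, T' ≤ t →
            μ {U : Matrix.orthogonalGroup (Fin n) ℝ |
                ∃ i j : Fin n,
                  t * Real.sqrt (Real.log n / n) ≤ |(U : Matrix (Fin n) (Fin n) ℝ) i j|} ≤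
              ENNReal.ofReal
                ((n : ℝ) ^ 2 *
                  (1 - Real.exp (-c * (n : ℝ) ^ ((1 : ℝ) - c' * t ^ 2)))) := by
  refine ⟨2, 1 / 2, 2, by norm_num, by norm_num, by norm_num, fun n hn μ _ hμ t ht => ?_⟩
  have : μ.IsMulLeftInvariant := ⟨hμ⟩
  have hn' : (2 : ℝ) ≤ n := by exact_mod_cast hn
  have hsq : n * (t * √(log n / n)) ^ 2 = t ^ 2 * log n := by
    rw [mul_pow, sq_sqrt (div_nonneg (log_nonneg (by linarith)) (by linarith))]
    field_simp
  calc _ ≤ ENNReal.ofReal (n ^ 2 * (2 * exp (-(n * (t * √(log n / n)) ^ 2) / 2))) := by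
        simpa using orthogonalGroup.measure_exists_abs_apply_ge_le μ (a := t * √(log n / n))
          (by positivity)
    _ ≤ _ := by
        rw [hsq]
        gcongr
        exact two_mul_exp_neg_sq_mul_log_le hn' ht
end

section
/- For every even integer p ≥ 4, Σ k₁·(k₂+1) = 2^{p−7}·(p+2)·(p+4), where the sum runs over all integers k₁ with 1 ≤ k₁ ≤ p/2, all integers k₂ with 1 ≤ k₂ ≤ p/2 − 1, and all tuples (l₁,…,l_{k₁+k₂}) of nonnegative integers satisfying l₁+⋯+l_{k₁} = p/2 − k₁ and l_{k₁+1}+⋯+l_{k₁+k₂} = p/2 − k₂ − 1. -/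
open Finset

lemma card_adt (k n : ℕ) : (Finset.Nat.antidiagonalTuple k n).card = (k + n - 1).choose n := by
  classical
  rw [← Finset.piAntidiag_univ_fin_eq_antidiagonalTuple n k,
    ← Finset.map_sym_eq_piAntidiag, Finset.card_map, Finset.sym_univ, ← Fintype.card,
    Sym.card_sym_eq_multichoose, Fintype.card_fin, Nat.multichoose_eq]

lemma two_mul_sum_choose (n c : ℕ) :
    2 * ∑ j ∈ range (n + 1), (j + c) * n.choose j = (n + 2 * c) * 2 ^ n := by
  have hrefl := Finset.sum_range_reflect (fun j => (j + c) * n.choose j) (n + 1)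
  have key : ∑ j ∈ range (n + 1), (n + 1 - 1 - j + c) * n.choose (n + 1 - 1 - j)
      + ∑ j ∈ range (n + 1), (j + c) * n.choose j
      = ∑ j ∈ range (n + 1), (n + 2 * c) * n.choose j := by
    rw [← Finset.sum_add_distrib]
    refine Finset.sum_congr rfl fun j hj => ?_
    have hj' : j ≤ n := Nat.lt_succ_iff.mp (Finset.mem_range.mp hj)
    rw [Nat.add_sub_cancel, Nat.choose_symm hj', ← add_mul]
    congr 1
    omega
  rw [hrefl] at key
  rw [two_mul, key, ← Finset.mul_sum, Nat.sum_range_choose]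

/-- For every even integer `p ≥ 4`,
`Σ k₁·(k₂+1) = 2^{p−7}·(p+2)·(p+4)`, where the sum runs over all integers `k₁` with
`1 ≤ k₁ ≤ p/2`, all integers `k₂` with `1 ≤ k₂ ≤ p/2 − 1`, and all tuples of nonnegative
integers `(l₁,…,l_{k₁+k₂})` with `l₁+⋯+l_{k₁} = p/2 − k₁` and
`l_{k₁+1}+⋯+l_{k₁+k₂} = p/2 − k₂ − 1`. -/
theorem sum_loops_eq (p : ℕ) (hp : 4 ≤ p) (hpe : 2 ∣ p) :
    ∑ k₁ ∈ Finset.Icc 1 (p / 2), ∑ k₂ ∈ Finset.Icc 1 (p / 2 - 1),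
      ∑ _l ∈ (Finset.Nat.antidiagonalTuple k₁ (p / 2 - k₁)) ×ˢ
        (Finset.Nat.antidiagonalTuple k₂ (p / 2 - k₂ - 1)),
        ((k₁ : ℚ) * ((k₂ : ℚ) + 1)) =
    (2 : ℚ) ^ ((p : ℤ) - 7) * ((p : ℚ) + 2) * ((p : ℚ) + 4) := by
  obtain ⟨m, rfl⟩ := hpe
  obtain ⟨n, rfl⟩ : ∃ n, m = n + 2 := ⟨m - 2, by omega⟩
  have h2 : 2 * (n + 2) / 2 = n + 2 := by omega
  rw [h2]
  -- rewrite inner sums as cardinalities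
  have hLHS : ∑ k₁ ∈ Finset.Icc 1 (n + 2), ∑ k₂ ∈ Finset.Icc 1 (n + 2 - 1),
      ∑ _l ∈ (Finset.Nat.antidiagonalTuple k₁ (n + 2 - k₁)) ×ˢ
        (Finset.Nat.antidiagonalTuple k₂ (n + 2 - k₂ - 1)),
        ((k₁ : ℚ) * ((k₂ : ℚ) + 1))
      = (∑ k₁ ∈ Finset.Icc 1 (n + 2), ((n + 1).choose (n + 2 - k₁) : ℚ) * k₁) *
        (∑ k₂ ∈ Finset.Icc 1 (n + 1), (n.choose (n + 1 - k₂) : ℚ) * (k₂ + 1)) := by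
    rw [Finset.sum_mul_sum]
    have : n + 2 - 1 = n + 1 := by omega
    rw [this]
    refine Finset.sum_congr rfl fun k₁ hk₁ => Finset.sum_congr rfl fun k₂ hk₂ => ?_
    obtain ⟨hk₁1, hk₁2⟩ := Finset.mem_Icc.mp hk₁
    obtain ⟨hk₂1, hk₂2⟩ := Finset.mem_Icc.mp hk₂
    rw [Finset.sum_const, Finset.card_product, card_adt, card_adt, nsmul_eq_mul]
    have e1 : k₁ + (n + 2 - k₁) - 1 = n + 1 := by omega
    have e2 : k₂ + (n + 2 - k₂ - 1) - 1 = n := by omega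
    rw [e1, e2]
    push_cast
    have : n + 2 - k₂ - 1 = n + 1 - k₂ := by omega
    rw [this]
    ring
  rw [hLHS]
  -- evaluate the two factors
  have hA : ∑ k₁ ∈ Finset.Icc 1 (n + 2), ((n + 1).choose (n + 2 - k₁) : ℚ) * k₁
      = ∑ j ∈ range (n + 2), ((j + 1) * (n + 1).choose j : ℕ) := by
    rw [← Finset.Ico_add_one_right_eq_Icc, Finset.sum_Ico_eq_sum_range]
    push_cast
    refine Finset.sum_congr (by norm_num) fun j hj => ?_
    have hj' : j < n + 2 := by simpa using hj
    have : n + 2 - (1 + j) = n + 1 - j := by omega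
    rw [this, Nat.choose_symm (by omega)]
    push_cast
    ring
  have hB : ∑ k₂ ∈ Finset.Icc 1 (n + 1), (n.choose (n + 1 - k₂) : ℚ) * (k₂ + 1)
      = ∑ j ∈ range (n + 1), ((j + 2) * n.choose j : ℕ) := by
    rw [← Finset.Ico_add_one_right_eq_Icc, Finset.sum_Ico_eq_sum_range]
    push_cast
    refine Finset.sum_congr (by norm_num) fun j hj => ?_
    have hj' : j < n + 1 := by simpa using hj
    have : n + 1 - (1 + j) = n - j := by omega
    rw [this, Nat.choose_symm (by omega)]
    push_cast
    ring
  have hA' := two_mul_sum_choose (n + 1) 1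
  have hB' := two_mul_sum_choose n 2
  have hAq : (2 : ℚ) * ∑ k₁ ∈ Finset.Icc 1 (n + 2), ((n + 1).choose (n + 2 - k₁) : ℚ) * k₁
      = (n + 3) * 2 ^ (n + 1) := by
    rw [hA]
    have := congrArg (fun x : ℕ => (x : ℚ)) hA'
    push_cast at this ⊢
    convert this using 2 <;> ring
  have hBq : (2 : ℚ) * ∑ k₂ ∈ Finset.Icc 1 (n + 1), (n.choose (n + 1 - k₂) : ℚ) * (k₂ + 1)
      = (n + 4) * 2 ^ n := by
    rw [hB]
    have := congrArg (fun x : ℕ => (x : ℚ)) hB'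
    push_cast at this ⊢
    convert this using 2 <;> ring
  -- finish
  have hz : (2 : ℚ) ^ ((2 * (n + 2) : ℕ) : ℤ) = 2 ^ (2 * (n + 2)) := by
    exact_mod_cast zpow_natCast (2 : ℚ) (2 * (n + 2))
  have hpow : (2 : ℚ) ^ (((2 * (n + 2) : ℕ) : ℤ) - 7) = 2 ^ (2 * (n + 2)) / 2 ^ 7 := by
    rw [zpow_sub₀ (by norm_num : (2 : ℚ) ≠ 0), hz]
    norm_num
  rw [hpow]
  have key : (4 : ℚ) * ((∑ k₁ ∈ Finset.Icc 1 (n + 2), ((n + 1).choose (n + 2 - k₁) : ℚ) * k₁) *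
      (∑ k₂ ∈ Finset.Icc 1 (n + 1), (n.choose (n + 1 - k₂) : ℚ) * (k₂ + 1)))
      = ((n : ℚ) + 3) * 2 ^ (n + 1) * (((n : ℚ) + 4) * 2 ^ n) := by
    rw [← hAq, ← hBq]; ring
  have h2n : (2 : ℚ) ^ (2 * (n + 2)) = 2 ^ (n + 1) * 2 ^ n * 8 := by
    rw [show 2 * (n + 2) = (n + 1) + n + 3 by ring, pow_add, pow_add]
    norm_num
  push_cast [h2n]
  nlinarith [key]
end

section
/- For every integer p ≥ 2: 𝒜_{1,2}(p) ≤ 2^{p−5}·(p² + 8p), where 𝒜_{1,2}(p) := Σ 1_{[l₁+⋯+l_{q−1} ≤ p/2 − q]}·1_{[l_q+⋯+l_{q+t} ≤ (p − t − 1_{[t>0]})/2 − 1]}, the sum running over all integers k, q, t with 2 ≤ k ≤ p−1, 1 ≤ q ≤ k, 0 ≤ t ≤ k−q, and all tuples (l₁,…,l_k) of nonnegative integers with l₁+⋯+l_k = p−1−k (empty sums of the l_i being 0, and the inequalities inside the indicators read as inequalities of rationals). -/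
/-!
Bounding both indicators by `1` already suffices. By stars and bars there are
`(p-2).choose (k-1)` tuples for each `k`, and there are `k(k+1)/2` pairs `(q, t)`, so with
`m = p - 2` the count is at most `∑ⱼ (j+1)(j+2)/2 · m.choose j = 2^(m-3) (m² + 7m + 8)`,
which is below `2^(m-3) ((m+2)² + 8(m+2)) = 2^(p-5) (p² + 8p)`.
-/

open Finset

/-- `𝒜_{1,2}(p)`: the sum of
`1_{[l₁+⋯+l_{q−1} ≤ p/2 − q]}·1_{[l_q+⋯+l_{q+t} ≤ (p − t − 1_{[t>0]})/2 − 1]}` over all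
integers `k, q, t` with `2 ≤ k ≤ p−1`, `1 ≤ q ≤ k`, `0 ≤ t ≤ k−q`, and all tuples
`(l₁,…,l_k)` of nonnegative integers with `l₁+⋯+l_k = p−1−k`. -/
noncomputable def A12 (p : ℕ) : ℚ :=
  ∑ k ∈ Finset.Icc 2 (p - 1), ∑ q ∈ Finset.Icc 1 k, ∑ t ∈ Finset.range (k - q + 1),
    ∑ l ∈ Finset.Nat.antidiagonalTuple k (p - 1 - k),
      (if ((∑ i : Fin k, if (i : ℕ) < q - 1 then (l i : ℚ) else 0) ≤
            (p : ℚ) / 2 - (q : ℚ)) then 1 else 0) *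
      (if ((∑ i : Fin k, if q - 1 ≤ (i : ℕ) ∧ (i : ℕ) < q + t then (l i : ℚ) else 0) ≤
            ((p : ℚ) - (t : ℚ) - (if 0 < t then 1 else 0)) / 2 - 1) then 1 else 0)

theorem Finset.Nat.card_antidiagonalTuple (k n : ℕ) :
    #(Nat.antidiagonalTuple k n) = (k + n - 1).choose n := by
  rw [← piAntidiag_univ_fin_eq_antidiagonalTuple]
  simpa [finsuppAntidiag] using
    card_finsuppAntidiag_nat_eq_choose (s := (univ : Finset (Fin k))) n

theorem Finset.Nat.card_antidiagonalTuple_succ_sub {j m : ℕ} (h : j ≤ m) :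
    #(Nat.antidiagonalTuple (j + 1) (m - j)) = m.choose j := by
  rw [Nat.card_antidiagonalTuple, show j + 1 + (m - j) - 1 = m by omega, Nat.choose_symm h]

theorem two_mul_sum_Icc_sub_add_one (k : ℕ) : 2 * ∑ q ∈ Icc 1 k, (k - q + 1) = k * (k + 1) := by
  have : ∑ q ∈ Icc 1 k, (k - q + 1) = ∑ i ∈ range (k + 1), i :=
    calc ∑ q ∈ Icc 1 k, (k - q + 1) = ∑ j ∈ range k, (k - 1 - j + 1) := by
          rw [← Ico_add_one_right_eq_Icc, sum_Ico_eq_sum_range]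
          exact sum_congr rfl fun j hj => by omega
      _ = ∑ j ∈ range k, (j + 1) := sum_range_reflect (· + 1) k
      _ = ∑ i ∈ range (k + 1), i := by rw [sum_range_succ', add_zero]
  rw [this, mul_comm, sum_range_id_mul_two, Nat.add_sub_cancel, mul_comm]

theorem sum_range_mul_choose_succ (f : ℕ → ℕ) (n : ℕ) :
    ∑ j ∈ range (n + 2), f j * (n + 1).choose j =
      ∑ j ∈ range (n + 1), f j * n.choose j + ∑ j ∈ range (n + 1), f (j + 1) * n.choose j := by
  rw [sum_range_succ', sum_range_succ' (fun j => f j * n.choose j)]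
  simp only [Nat.choose_succ_succ', mul_add, sum_add_distrib]
  rw [sum_range_succ (fun j => f (j + 1) * n.choose (j + 1)), Nat.choose_succ_self]
  simp only [mul_zero, add_zero, Nat.choose_zero_right]
  ring

-- The shift `a` is needed for the induction: Pascal's rule turns shift `a` into shift `a + 1`.
theorem four_mul_sum_range_mul_choose (n a : ℕ) :
    4 * ∑ j ∈ range (n + 1), (j + a) * (j + a + 1) * n.choose j =
      2 ^ n * (n ^ 2 + (4 * a + 3) * n + 4 * a ^ 2 + 4 * a) := by
  induction n generalizing a with
  | zero =>
    simp only [zero_add, range_one, sum_singleton, Nat.choose_self, mul_one, pow_zero]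
    ring
  | succ n ih =>
    rw [sum_range_mul_choose_succ (fun j => (j + a) * (j + a + 1)), mul_add, ih a]
    have ih' := ih (a + 1)
    simp only [← add_assoc] at ih'
    simp only [add_right_comm _ 1 a, ih']
    ring

theorem A12_le_sum_card (p : ℕ) :
    A12 p ≤ ∑ k ∈ Icc 2 (p - 1), ∑ q ∈ Icc 1 k, ∑ _t ∈ range (k - q + 1),
      (#(Nat.antidiagonalTuple k (p - 1 - k)) : ℚ) := by
  unfold A12
  gcongr
  refine (sum_le_card_nsmul _ _ 1 fun l _ => ?_).trans (by simp)
  split_ifs <;> norm_num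

theorem thirty_two_mul_sum_card_antidiagonalTuple_le (p : ℕ) :
    32 * ∑ k ∈ Icc 2 (p - 1), ∑ q ∈ Icc 1 k, ∑ _t ∈ range (k - q + 1),
      #(Nat.antidiagonalTuple k (p - 1 - k)) ≤ 2 ^ p * (p ^ 2 + 8 * p) := by
  rcases lt_or_ge p 2 with hp | hp
  · simp [Icc_eq_empty_of_lt (by omega : p - 1 < 2)]
  obtain ⟨m, rfl⟩ := Nat.exists_eq_add_of_le' hp
  rw [show m + 2 - 1 = m + 1 from rfl]
  calc 32 * ∑ k ∈ Icc 2 (m + 1), ∑ q ∈ Icc 1 k, ∑ _t ∈ range (k - q + 1),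
        #(Nat.antidiagonalTuple k (m + 1 - k))
      = 16 * ∑ k ∈ Icc 2 (m + 1), k * (k + 1) * #(Nat.antidiagonalTuple k (m + 1 - k)) := by
        simp only [sum_const, card_range, smul_eq_mul, ← sum_mul, mul_sum]
        exact sum_congr rfl fun k _ => by rw [← two_mul_sum_Icc_sub_add_one]; ring
    _ ≤ 16 * ∑ k ∈ Icc 1 (m + 1), k * (k + 1) * #(Nat.antidiagonalTuple k (m + 1 - k)) :=
        Nat.mul_le_mul_left _ (sum_le_sum_of_subset (Icc_subset_Icc_left one_le_two))
    _ = 4 * (4 * ∑ j ∈ range (m + 1), (j + 1) * (j + 1 + 1) * m.choose j) := by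
        rw [← Ico_add_one_right_eq_Icc, sum_Ico_eq_sum_range, ← mul_assoc]
        refine congrArg _ (sum_congr rfl fun j hj => ?_)
        rw [add_comm 1 j, show m + 1 - (j + 1) = m - j by omega,
          Nat.card_antidiagonalTuple_succ_sub (Nat.lt_succ_iff.mp (mem_range.mp hj))]
    _ = 2 ^ (m + 2) * (m ^ 2 + 7 * m + 8) := by
        rw [four_mul_sum_range_mul_choose]; ring
    _ ≤ 2 ^ (m + 2) * ((m + 2) ^ 2 + 8 * (m + 2)) := Nat.mul_le_mul_left _ (by nlinarith)

theorem A12_bound_general (p : ℕ) :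
    A12 p ≤ (2 : ℚ) ^ ((p : ℤ) - 5) * ((p : ℚ) ^ 2 + 8 * (p : ℚ)) := by
  have hcount : (32 : ℚ) * ∑ k ∈ Icc 2 (p - 1), ∑ q ∈ Icc 1 k, ∑ _t ∈ range (k - q + 1),
      (#(Nat.antidiagonalTuple k (p - 1 - k)) : ℚ) ≤ 2 ^ p * (p ^ 2 + 8 * p) := by
    exact_mod_cast thirty_two_mul_sum_card_antidiagonalTuple_le p
  have hpow : (2 : ℚ) ^ ((p : ℤ) - 5) = 2 ^ p / 32 := by
    rw [zpow_sub₀ two_ne_zero, zpow_natCast]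
    norm_num
  rw [hpow, div_mul_eq_mul_div, le_div_iff₀ (by norm_num)]
  linarith [A12_le_sum_card p]

/-- For every integer `p ≥ 2`: `𝒜_{1,2}(p) ≤ 2^{p−5}·(p² + 8p)`. -/
theorem A12_bound (p : ℕ) (hp : 2 ≤ p) :
    A12 p ≤ (2 : ℚ) ^ ((p : ℤ) - 5) * ((p : ℚ) ^ 2 + 8 * (p : ℚ)) :=
  A12_bound_general p
end
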